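/- Let 𝒴 be a class of right R-modules closed under direct products and let X be an exact complex of left R-modules. If Y ⊗_R X is an exact complex for every Y ∈ 𝒴, then Y ⊗_R X is exact for every Y that is a pure submodule of a product of modules from 𝒴. -/

import Mathlib

open CategoryTheory CategoryTheory.Limits

set_option autoImplicit false

universe u

/-!
Write `M⋆` for the character module `Hom_ℤ(M, ℚ/ℤ)`. Since `ℚ/ℤ` is an injective cogenerator,
a sequence is exact iff its character dual is, and `(M ⊗ X)⋆ ≃ Hom(X, M⋆)`; so `M ⊗ X` is exact
iff `Hom(X, M⋆)` is. Purity of `P` in `Y = ∏ f i` makes `P⋆` a retract of `Y⋆`, and `Hom(X, -)`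
carries exactness from a module to its retracts.
-/

open scoped TensorProduct

section

variable {R A B C : Type*} [CommRing R] [AddCommGroup A] [Module R A] [AddCommGroup B]
  [Module R B] [AddCommGroup C] [Module R C] {f : A →ₗ[R] B} {g : B →ₗ[R] C}

lemma Function.Exact.lcomp_of_retract {N N' : Type*} [AddCommGroup N] [Module R N]
    [AddCommGroup N'] [Module R N'] (s : N →ₗ[R] N') (r : N' →ₗ[R] N)
    (hrs : r ∘ₗ s = LinearMap.id) (h : Function.Exact (g.lcomp R N') (f.lcomp R N')) :
    Function.Exact (g.lcomp R N) (f.lcomp R N) := by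
  intro φ
  constructor
  · intro hφ
    obtain ⟨ψ, hψ⟩ := (h (s ∘ₗ φ)).mp (by
      rw [LinearMap.lcomp_apply'] at hφ ⊢
      rw [LinearMap.comp_assoc, hφ, LinearMap.comp_zero])
    refine ⟨r ∘ₗ ψ, ?_⟩
    rw [LinearMap.lcomp_apply'] at hψ ⊢
    rw [LinearMap.comp_assoc, hψ, ← LinearMap.comp_assoc, hrs, LinearMap.id_comp]
  · rintro ⟨ψ, rfl⟩
    have h0 := congr_arg (r ∘ₗ ·) (h.apply_apply_eq_zero (s ∘ₗ ψ))
    simpa only [LinearMap.lcomp_apply', LinearMap.comp_zero, ← LinearMap.comp_assoc, hrs,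
      LinearMap.id_comp] using h0

namespace CharacterModule

lemma exists_dual_eq_zero_apply_ne_zero {b : B} (hb : b ∉ LinearMap.range f) :
    ∃ c : CharacterModule B, dual f c = 0 ∧ c b ≠ 0 := by
  obtain ⟨c, hc⟩ := exists_character_apply_ne_zero_of_ne_zero
    ((Submodule.Quotient.mk_eq_zero (LinearMap.range f)).not.mpr hb)
  refine ⟨dual (LinearMap.range f).mkQ c, ?_, hc⟩
  rw [← LinearMap.comp_apply, ← dual_comp, LinearMap.range_mkQ_comp, dual_zero,
    LinearMap.zero_apply]

lemma exists_dual_eq_of_exact (hfg : Function.Exact f g) {c : CharacterModule B}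
    (hc : dual f c = 0) : ∃ c', dual g c' = c := by
  have hker : g.rangeRestrict.toAddMonoidHom.ker ≤ c.ker := by
    intro b hb
    obtain ⟨a, rfl⟩ := (hfg b).mp (congr_arg Subtype.val hb)
    exact DFunLike.congr_fun hc a
  let c₀ : CharacterModule (LinearMap.range g) :=
    AddMonoidHom.liftOfRightInverse _ _
      (Function.rightInverse_surjInv g.surjective_rangeRestrict) ⟨c, hker⟩
  obtain ⟨c', hc'⟩ := dual_surjective_of_injective _ (LinearMap.range g).injective_subtype c₀
  refine ⟨c', DFunLike.ext _ _ fun b => ?_⟩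
  exact (DFunLike.congr_fun hc' (g.rangeRestrict b)).trans
    (AddMonoidHom.liftOfRightInverse_comp_apply _ _ _ _ b)

theorem exact_dual_iff : Function.Exact (dual g) (dual f) ↔ Function.Exact f g := by
  refine ⟨fun h b => ⟨fun hb => ?_, ?_⟩, fun h c => ⟨fun hc => exists_dual_eq_of_exact h hc, ?_⟩⟩
  · by_contra hbf
    obtain ⟨c, hfc, hcb⟩ := exists_dual_eq_zero_apply_ne_zero hbf
    obtain ⟨c', rfl⟩ := (h c).mp hfc
    exact hcb (show c' (g b) = 0 by rw [hb, map_zero])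
  · rintro ⟨a, rfl⟩
    exact eq_zero_of_character_apply fun c => DFunLike.congr_fun (h.apply_apply_eq_zero c) a
  · rintro ⟨c', rfl⟩
    rw [← LinearMap.comp_apply, ← dual_comp, h.linearMap_comp_eq_zero, dual_zero,
      LinearMap.zero_apply]

variable {M : Type*} [AddCommGroup M] [Module R M]

variable (M) in
noncomputable def lTensorHomEquiv :
    (A →ₗ[R] CharacterModule M) ≃ₗ[R] CharacterModule (M ⊗[R] A) :=
  homEquiv ≪≫ₗ congr (TensorProduct.comm R A M)

lemma dual_lTensor_comp_lTensorHomEquiv (f : A →ₗ[R] B) :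
    dual (f.lTensor M) ∘ₗ (lTensorHomEquiv M).toLinearMap =
      (lTensorHomEquiv M).toLinearMap ∘ₗ f.lcomp R (CharacterModule M) := by
  refine LinearMap.ext fun φ => DFunLike.ext _ _ fun x => ?_
  induction x using TensorProduct.induction_on with
  | zero => simp only [map_zero]
  | tmul m a => rfl
  | add x y hx hy => simp only [map_add, hx, hy]

theorem exact_lTensor_iff_exact_lcomp :
    Function.Exact (f.lTensor M) (g.lTensor M) ↔
      Function.Exact (g.lcomp R (CharacterModule M)) (f.lcomp R (CharacterModule M)) := by
  rw [← exact_dual_iff]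
  exact Function.Exact.iff_of_ladder_linearEquiv (dual_lTensor_comp_lTensorHomEquiv g)
    (dual_lTensor_comp_lTensorHomEquiv f)

lemma exists_dual_comp_eq_id_of_lTensor_injective (e : M →ₗ[R] B)
    (he : Function.Injective (e.lTensor (CharacterModule M))) :
    ∃ s : CharacterModule M →ₗ[R] CharacterModule B, dual e ∘ₗ s = LinearMap.id := by
  -- extend the evaluation pairing `χ ⊗ m ↦ χ m` along `M⋆ ⊗ M → M⋆ ⊗ B`
  obtain ⟨ev, hev⟩ := dual_surjective_of_injective _ he (uncurry LinearMap.id)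
  refine ⟨curry ev, LinearMap.ext fun χ => DFunLike.ext _ _ fun m => ?_⟩
  exact DFunLike.congr_fun hev (χ ⊗ₜ m)

end CharacterModule

end

variable {R : Type u} [CommRing R]

/-- A short exact sequence of `R`-modules encoded by two linear maps. -/
def IsSES {A B C : ModuleCat.{u} R} (f : A →ₗ[R] B) (g : B →ₗ[R] C) : Prop :=
  Function.Injective f ∧ Function.Exact f g ∧ Function.Surjective g

theorem statement6 (𝒴 : ModuleCat.{u} R → Prop)
    (hprod : ∀ (ι : Type u) (f : ι → ModuleCat.{u} R), (∀ i, 𝒴 (f i)) →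
      𝒴 (ModuleCat.of R (∀ i, f i)))
    (Xc : ℤ → ModuleCat.{u} R) (d : ∀ n : ℤ, Xc n →ₗ[R] Xc (n + 1))
    (hten : ∀ Y : ModuleCat.{u} R, 𝒴 Y → ∀ n,
      Function.Exact (LinearMap.lTensor Y (d n)) (LinearMap.lTensor Y (d (n + 1))))
    (P : ModuleCat.{u} R) (ι : Type u) (f : ι → ModuleCat.{u} R) (hf : ∀ i, 𝒴 (f i))
    (e : P →ₗ[R] (∀ i, f i))
    (hpure : ∀ (K : Type u) [AddCommGroup K] [Module R K],
      Function.Injective (LinearMap.lTensor K e)) :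
    ∀ n, Function.Exact (LinearMap.lTensor P (d n)) (LinearMap.lTensor P (d (n + 1))) := by
  intro n
  obtain ⟨s, hs⟩ := CharacterModule.exists_dual_comp_eq_id_of_lTensor_injective e
    (hpure (CharacterModule P))
  have hY := CharacterModule.exact_lTensor_iff_exact_lcomp.mp (hten _ (hprod ι f hf) n)
  exact CharacterModule.exact_lTensor_iff_exact_lcomp.mpr (hY.lcomp_of_retract s _ hs)
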